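/- arXiv:1002.0607 — 5 statements merged into one kernel-verified Lean document; each statement's English description precedes it below -/
import Mathlib

section
/- Let m ∈ ℕ and let α be an m×m complex matrix with operator norm ‖α‖ < 1, ρ = (I_m − α*α)^{1/2}, ρ̃ = (I_m − αα*)^{1/2}, and set a = I_m + α, b = I_m − α. Then a*ρ̃^{−2}a = aρ^{−2}a*, b*ρ̃^{−2}b = bρ^{−2}b*, and a*ρ̃^{−2}b + aρ^{−2}b* = b*ρ̃^{−2}a + bρ^{−2}a* = 2·I_m. -/
open Matrix
open scoped Matrix.Norms.L2Operator ComplexOrder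

open scoped Ring

/-!
Write `U = 1 - α*α` and `V = 1 - αα*`. The push-through identity `α U⁻¹ = V⁻¹ α` (from
`α U = V α`) and its consequence `α* V⁻¹ α = U⁻¹ (1 - U) = U⁻¹ - 1` turn each of the four
identities into a formal rearrangement. This works in any ring, for `x, y` with `1 - xy`
and `1 - yx` invertible, with `y = α*`. Finally `U` and `V` are invertible because
`‖α*α‖ = ‖αα*‖ = ‖α‖² < 1`.
-/

section PushThrough

variable {R : Type*} [Ring R] {x y : R}

theorem mul_inverse_one_sub_mul_comm (hxy : IsUnit (1 - x * y)) (hyx : IsUnit (1 - y * x)) :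
    x * (1 - y * x)⁻¹ʳ = (1 - x * y)⁻¹ʳ * x :=
  calc x * (1 - y * x)⁻¹ʳ = (1 - x * y)⁻¹ʳ * ((1 - x * y) * x) * (1 - y * x)⁻¹ʳ := by
        rw [Ring.inverse_mul_cancel_left _ _ hxy]
    _ = (1 - x * y)⁻¹ʳ * (x * (1 - y * x)) * (1 - y * x)⁻¹ʳ := by noncomm_ring
    _ = (1 - x * y)⁻¹ʳ * x := by rw [← mul_assoc, Ring.mul_inverse_cancel_right _ _ hyx]

theorem mul_inverse_one_sub_mul_mul (hxy : IsUnit (1 - x * y)) (hyx : IsUnit (1 - y * x)) :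
    y * (1 - x * y)⁻¹ʳ * x = (1 - y * x)⁻¹ʳ - 1 :=
  calc y * (1 - x * y)⁻¹ʳ * x = (1 - y * x)⁻¹ʳ * (1 - (1 - y * x)) := by
        rw [mul_inverse_one_sub_mul_comm hyx hxy, sub_sub_cancel, mul_assoc]
    _ = (1 - y * x)⁻¹ʳ - 1 := by rw [mul_sub, mul_one, Ring.inverse_mul_cancel _ hyx]

theorem one_add_mul_inverse_one_sub_mul_mul_one_add_comm
    (hxy : IsUnit (1 - x * y)) (hyx : IsUnit (1 - y * x)) :
    (1 + y) * (1 - x * y)⁻¹ʳ * (1 + x) = (1 + x) * (1 - y * x)⁻¹ʳ * (1 + y) := by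
  have hx := mul_inverse_one_sub_mul_comm hxy hyx
  have hy := mul_inverse_one_sub_mul_comm hyx hxy
  have hyx' := mul_inverse_one_sub_mul_mul hxy hyx
  have hxy' := mul_inverse_one_sub_mul_mul hyx hxy
  set V := (1 - x * y)⁻¹ʳ
  set U := (1 - y * x)⁻¹ʳ
  calc (1 + y) * V * (1 + x) = V + V * x + y * V + y * V * x := by noncomm_ring
    _ = U + U * y + x * U + x * U * y := by rw [hyx', hxy', hx, hy]; abel
    _ = (1 + x) * U * (1 + y) := by noncomm_ring

theorem one_add_mul_inverse_one_sub_mul_mul_one_sub_add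
    (hxy : IsUnit (1 - x * y)) (hyx : IsUnit (1 - y * x)) :
    (1 + y) * (1 - x * y)⁻¹ʳ * (1 - x) + (1 + x) * (1 - y * x)⁻¹ʳ * (1 - y) = 2 := by
  have hx := mul_inverse_one_sub_mul_comm hxy hyx
  have hy := mul_inverse_one_sub_mul_comm hyx hxy
  have hyx' := mul_inverse_one_sub_mul_mul hxy hyx
  have hxy' := mul_inverse_one_sub_mul_mul hyx hxy
  set V := (1 - x * y)⁻¹ʳ
  set U := (1 - y * x)⁻¹ʳ
  calc (1 + y) * V * (1 - x) + (1 + x) * U * (1 - y)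
      = V - V * x + y * V - y * V * x + (U - U * y + x * U - x * U * y) := by noncomm_ring
    _ = 2 := by rw [hyx', hxy', hx, hy, ← one_add_one_eq_two]; abel

theorem one_sub_mul_inverse_one_sub_mul_mul_one_sub_comm
    (hxy : IsUnit (1 - x * y)) (hyx : IsUnit (1 - y * x)) :
    (1 - y) * (1 - x * y)⁻¹ʳ * (1 - x) = (1 - x) * (1 - y * x)⁻¹ʳ * (1 - y) := by
  rw [← neg_mul_neg] at hxy hyx
  simpa only [neg_mul_neg, ← sub_eq_add_neg] using
    one_add_mul_inverse_one_sub_mul_mul_one_add_comm hxy hyx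

theorem one_sub_mul_inverse_one_sub_mul_mul_one_add_add
    (hxy : IsUnit (1 - x * y)) (hyx : IsUnit (1 - y * x)) :
    (1 - y) * (1 - x * y)⁻¹ʳ * (1 + x) + (1 - x) * (1 - y * x)⁻¹ʳ * (1 + y) = 2 := by
  rw [← neg_mul_neg] at hxy hyx
  simpa only [neg_mul_neg, ← sub_eq_add_neg, sub_neg_eq_add] using
    one_add_mul_inverse_one_sub_mul_mul_one_sub_add hxy hyx

end PushThrough

section CStarRing

variable {A : Type*} [NormedRing A] [StarRing A] [CStarRing A] [HasSummableGeomSeries A]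
  {x : A}

theorem isUnit_one_sub_star_mul_self (hx : ‖x‖ < 1) : IsUnit (1 - star x * x) :=
  isUnit_one_sub_of_norm_lt_one <| by
    rw [CStarRing.norm_star_mul_self]
    exact mul_lt_one_of_nonneg_of_lt_one_left (norm_nonneg x) hx hx.le

theorem isUnit_one_sub_mul_star_self (hx : ‖x‖ < 1) : IsUnit (1 - x * star x) :=
  isUnit_one_sub_of_norm_lt_one <| by
    rw [CStarRing.norm_self_mul_star]
    exact mul_lt_one_of_nonneg_of_lt_one_left (norm_nonneg x) hx hx.le

end CStarRing

theorem cmv_ab_identities_general (m : ℕ) (α ρ ρt a b : Matrix (Fin m) (Fin m) ℂ)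
    (hα : ‖α‖ < 1)
    (hρ2 : ρ * ρ = 1 - αᴴ * α)
    (hρt2 : ρt * ρt = 1 - α * αᴴ)
    (ha : a = 1 + α) (hb : b = 1 - α) :
    aᴴ * (ρt ^ 2)⁻¹ * a = a * (ρ ^ 2)⁻¹ * aᴴ ∧
    bᴴ * (ρt ^ 2)⁻¹ * b = b * (ρ ^ 2)⁻¹ * bᴴ ∧
    aᴴ * (ρt ^ 2)⁻¹ * b + a * (ρ ^ 2)⁻¹ * bᴴ = (2 : ℂ) • (1 : Matrix (Fin m) (Fin m) ℂ) ∧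
    bᴴ * (ρt ^ 2)⁻¹ * a + b * (ρ ^ 2)⁻¹ * aᴴ = (2 : ℂ) • (1 : Matrix (Fin m) (Fin m) ℂ) := by
  have hv : IsUnit (1 - α * αᴴ) := isUnit_one_sub_mul_star_self hα
  have hu : IsUnit (1 - αᴴ * α) := isUnit_one_sub_star_mul_self hα
  subst ha hb
  simp only [sq, hρ2, hρt2, nonsing_inv_eq_ringInverse, conjTranspose_add, conjTranspose_sub,
    conjTranspose_one, two_smul, one_add_one_eq_two]
  exact ⟨one_add_mul_inverse_one_sub_mul_mul_one_add_comm hv hu,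
    one_sub_mul_inverse_one_sub_mul_mul_one_sub_comm hv hu,
    one_add_mul_inverse_one_sub_mul_mul_one_sub_add hv hu,
    one_sub_mul_inverse_one_sub_mul_mul_one_add_add hv hu⟩

/-- For an `m × m` complex matrix `α` with operator norm `‖α‖ < 1`, with
`ρ = (I - αᴴα)^{1/2}`, `ρ̃ = (I - ααᴴ)^{1/2}`, `a = I + α`, `b = I - α`, one has
`aᴴ ρ̃⁻² a = a ρ⁻² aᴴ`, `bᴴ ρ̃⁻² b = b ρ⁻² bᴴ`, and
`aᴴ ρ̃⁻² b + a ρ⁻² bᴴ = bᴴ ρ̃⁻² a + b ρ⁻² aᴴ = 2 I`. -/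
theorem cmv_ab_identities (m : ℕ) (α ρ ρt a b : Matrix (Fin m) (Fin m) ℂ)
    (hα : ‖α‖ < 1)
    (hρ : ρ.PosSemidef) (hρ2 : ρ * ρ = 1 - αᴴ * α)
    (hρt : ρt.PosSemidef) (hρt2 : ρt * ρt = 1 - α * αᴴ)
    (ha : a = 1 + α) (hb : b = 1 - α) :
    aᴴ * (ρt ^ 2)⁻¹ * a = a * (ρ ^ 2)⁻¹ * aᴴ ∧
    bᴴ * (ρt ^ 2)⁻¹ * b = b * (ρ ^ 2)⁻¹ * bᴴ ∧
    aᴴ * (ρt ^ 2)⁻¹ * b + a * (ρ ^ 2)⁻¹ * bᴴ = (2 : ℂ) • (1 : Matrix (Fin m) (Fin m) ℂ) ∧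
    bᴴ * (ρt ^ 2)⁻¹ * a + b * (ρ ^ 2)⁻¹ * aᴴ = (2 : ℂ) • (1 : Matrix (Fin m) (Fin m) ℂ) :=
  cmv_ab_identities_general m α ρ ρt a b hα hρ2 hρt2 ha hb
end

section
/- Let α ∈ ℂ with |α| < 1, ρ = (1 − |α|²)^{1/2}, and let t₁, t₂ ∈ ℝ. Set w = i(α e^{−it₂/2} − e^{it₂/2}) (which is nonzero). Then the 2×2 complex matrix A = [[e^{it₁} − α, ρ], [ρ, conj(α) − e^{−it₂}]] has rank 1 if e^{it₁} = w/conj(w), and has rank 2 otherwise; in particular rank(A) ≥ 1 always. -/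
/-!
With `u = e^{it₂/2}` one has `w = i u⁻¹ (α - e^{it₂})` and `conj w = i u⁻¹ (1 - conj α e^{it₂})`,
so `w / conj w` is the Blaschke factor `(α - e^{it₂}) / (1 - conj α e^{it₂})`, and `w ≠ 0` because
`|α| < 1`. Using `ρ² = 1 - |α|²`, the determinant of `A` is
`-e^{-it₂} (e^{it₁} (1 - conj α e^{it₂}) - (α - e^{it₂}))`, which vanishes exactly when
`e^{it₁} = w / conj w`. Since the off-diagonal entry `ρ` is nonzero, `A ≠ 0`, so a singular `A`
has rank 1 and a regular one rank 2.
-/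

open Matrix Complex
open ComplexConjugate

namespace Matrix

variable {K m n : Type*} [Field K] [Fintype n]

theorem rank_pos_of_ne_zero {A : Matrix m n K} (hA : A ≠ 0) : 0 < A.rank := by
  obtain ⟨i, j, hij⟩ : ∃ i j, A i j ≠ 0 := by
    by_contra! h
    exact hA (Matrix.ext h)
  classical
  rw [rank, Module.finrank_pos_iff_exists_ne_zero]
  refine ⟨⟨A *ᵥ Pi.single j 1, Pi.single j 1, rfl⟩, fun h => hij ?_⟩
  simpa [mulVec_single] using congrFun (congrArg Subtype.val h) i

theorem rank_lt_card_of_det_eq_zero [DecidableEq n] {A : Matrix n n K} (hA : A.det = 0) :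
    A.rank < Fintype.card n := by
  obtain ⟨v, hv0, hv⟩ := exists_mulVec_eq_zero_iff.mpr hA
  have hker : 0 < Module.finrank K (LinearMap.ker A.mulVecLin) :=
    Module.finrank_pos_iff_exists_ne_zero.mpr ⟨⟨v, hv⟩, fun h => hv0 (congrArg Subtype.val h)⟩
  have hsum := LinearMap.finrank_range_add_finrank_ker A.mulVecLin
  rw [Module.finrank_fintype_fun_eq_card] at hsum
  rw [rank]
  omega

theorem rank_eq_one_of_det_eq_zero {A : Matrix (Fin 2) (Fin 2) K} (hdet : A.det = 0)
    (hA : A ≠ 0) : A.rank = 1 := by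
  have hlt := rank_lt_card_of_det_eq_zero hdet
  have hpos := rank_pos_of_ne_zero hA
  rw [Fintype.card_fin] at hlt
  omega

end Matrix

namespace Complex

variable {u : ℂ}

theorem I_mul_sub_ne_zero (hu : ‖u‖ = 1) {α : ℂ} (hα : ‖α‖ < 1) : I * (α * u⁻¹ - u) ≠ 0 := by
  have hu0 : u ≠ 0 := norm_ne_zero_iff.mp (by simp [hu])
  refine mul_ne_zero I_ne_zero fun h => hα.ne ?_
  rw [sub_eq_zero, mul_inv_eq_iff_eq_mul₀ hu0] at h
  simp [h, hu]

theorem I_mul_sub_div_conj (hu : ‖u‖ = 1) (α : ℂ) :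
    I * (α * u⁻¹ - u) / conj (I * (α * u⁻¹ - u)) = (α - u ^ 2) / (1 - conj α * u ^ 2) := by
  have hu0 : u ≠ 0 := norm_ne_zero_iff.mp (by simp [hu])
  have hconj : conj (I * (α * u⁻¹ - u)) = I * u⁻¹ * (1 - conj α * u ^ 2) := by
    simp only [map_mul, map_sub, map_inv₀, conj_I, ← inv_eq_conj hu, inv_inv]
    field_simp
    ring
  rw [hconj, show I * (α * u⁻¹ - u) = I * u⁻¹ * (α - u ^ 2) by field_simp,
    mul_div_mul_left _ _ (by simp [hu0])]

theorem one_sub_conj_mul_ne_zero (hu : ‖u‖ = 1) {α : ℂ} (hα : ‖α‖ < 1) :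
    1 - conj α * u ≠ 0 := by
  refine sub_ne_zero.mpr fun h => hα.ne ?_
  simpa [hu] using congrArg norm h.symm

end Complex

theorem det_cmv_eq {α z e : ℂ} {ρ : ℝ} (he : e ≠ 0) (hρ : ρ ^ 2 = 1 - ‖α‖ ^ 2) :
    !![z - α, (ρ : ℂ); (ρ : ℂ), conj α - e⁻¹].det =
      -e⁻¹ * (z * (1 - conj α * e) - (α - e)) := by
  have hρ' : (ρ : ℂ) ^ 2 = 1 - α * conj α := by
    rw [mul_conj, normSq_eq_norm_sq]; exact_mod_cast hρ
  rw [det_fin_two_of]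
  linear_combination (1 - z * conj α) * inv_mul_cancel₀ he - hρ'

/-- For `α ∈ ℂ` with `|α| < 1`, `ρ = (1 - |α|²)^{1/2}`, `t₁ t₂ ∈ ℝ`, and
`w = i(α e^{-it₂/2} - e^{it₂/2})` (nonzero), the matrix
`A = [[e^{it₁} - α, ρ], [ρ, conj α - e^{-it₂}]]` has rank 1 if `e^{it₁} = w/conj w`,
rank 2 otherwise; in particular `rank A ≥ 1`. -/
theorem cmv_decoupling_rank (α : ℂ) (hα : ‖α‖ < 1)
    (ρ : ℝ) (hρ : ρ = Real.sqrt (1 - ‖α‖ ^ 2)) (t₁ t₂ : ℝ) (w : ℂ)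
    (hw : w = Complex.I * (α * Complex.exp (-Complex.I * (t₂ / 2)) -
            Complex.exp (Complex.I * (t₂ / 2))))
    (A : Matrix (Fin 2) (Fin 2) ℂ)
    (hA : A = !![Complex.exp (Complex.I * t₁) - α, (ρ : ℂ);
                 (ρ : ℂ), conj α - Complex.exp (-Complex.I * t₂)]) :
    w ≠ 0 ∧
    (Complex.exp (Complex.I * t₁) = w / conj w → A.rank = 1) ∧
    (Complex.exp (Complex.I * t₁) ≠ w / conj w → A.rank = 2) ∧
    1 ≤ A.rank := by
  set u := exp (I * (t₂ / 2)) with hu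
  have hu1 : ‖u‖ = 1 := by simp [hu, norm_exp]
  have hw' : w = I * (α * u⁻¹ - u) := by rw [hw, neg_mul, exp_neg]
  have hu2 : u ^ 2 = exp (I * t₂) := by rw [hu, ← exp_nat_mul]; ring_nf
  have hρ2 : ρ ^ 2 = 1 - ‖α‖ ^ 2 := hρ ▸ Real.sq_sqrt (by nlinarith [norm_nonneg α])
  have hdet : A.det = 0 ↔ exp (I * t₁) = w / conj w := by
    rw [hA, neg_mul, exp_neg, det_cmv_eq (exp_ne_zero _) hρ2, hw', I_mul_sub_div_conj hu1, hu2,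
      eq_div_iff (one_sub_conj_mul_ne_zero (norm_exp_I_mul_ofReal t₂) hα)]
    simp [sub_eq_zero]
  have hA0 : A ≠ 0 := by
    have hρ0 : ρ ≠ 0 := hρ ▸ (Real.sqrt_pos.mpr (by nlinarith [norm_nonneg α])).ne'
    intro h
    simpa [hA, hρ0] using congrFun (congrFun h 1) 0
  refine ⟨hw' ▸ I_mul_sub_ne_zero hu1 hα, fun h => rank_eq_one_of_det_eq_zero (hdet.mpr h) hA0,
    fun h => ?_, rank_pos_of_ne_zero hA0⟩
  simpa using rank_of_det_ne_zero (mt hdet.mp h)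
end

section
/- Let {α_k}_{k∈ℤ} ⊂ ℂ with |α_k| < 1 for all k, and ρ_k = (1 − |α_k|²)^{1/2}. Fix an odd integer k₀ and t₁, t₂ ∈ ℝ, and set w = i(α_{k₀} e^{−it₂/2} − e^{it₂/2}) (≠ 0). Let V, W, W′ be unitary bounded operators on the Hilbert space ℓ²(ℤ, ℂ) with standard orthonormal basis (δ_k)_{k∈ℤ}, whose matrix entries ⟨δ_j, ·δ_k⟩ are as follows: V is block diagonal with, for each k ∈ ℤ, the 2×2 block Θ_{2k} = [[−α_{2k}, ρ_{2k}], [ρ_{2k}, conj(α_{2k})]] occupying rows and columns (2k−1, 2k), and all other entries zero; W is block diagonal with, for each k ∈ ℤ, the block Θ_{2k+1} = [[−α_{2k+1}, ρ_{2k+1}], [ρ_{2k+1}, conj(α_{2k+1})]] occupying rows and columns (2k, 2k+1), and all other entries zero; W′ has the same matrix entries as W except that the block occupying rows and columns (k₀−1, k₀) is replaced by [[−e^{it₁}, 0], [0, e^{−it₂}]]. Set U = V∘W and U′ = V∘W′. Then the range of U − U′ is finite-dimensional, of dimension 1 if e^{it₁} = w/conj(w), and of dimension 2 otherwise. Moreover,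 for any z ∈ ℂ such that U − zI and U′ − zI are boundedly invertible, the range of (U − zI)^{−1} − (U′ − zI)^{−1} has the same dimension as the range of U − U′. -/
open Complex Matrix
open ComplexConjugate

noncomputable section

/-- The Hilbert space `ℓ²(ℤ, ℂ)`. -/
abbrev CMVl2 : Type := lp (fun _ : ℤ => ℂ) 2

/-- The matrix entry `⟨δ_j, T δ_k⟩` of a bounded operator `T` on `ℓ²(ℤ, ℂ)` in the
standard orthonormal basis. -/
def cmvEntry (T : CMVl2 →L[ℂ] CMVl2) (j k : ℤ) : ℂ :=
  inner ℂ (lp.single 2 j (1 : ℂ)) (T (lp.single 2 k (1 : ℂ)))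

/-!
`W - W'` has nonzero matrix entries only in the `2 × 2` block at `(k₀ - 1, k₀)`, where it is
`[[e^{it₁} - α, ρ], [ρ, conj α - e^{-it₂}]]` with `α = α_{k₀}`, `ρ = ρ_{k₀}`. As `V` is injective,
`U - U' = V (W - W')` has the rank of this matrix, which is `1` or `2` because `ρ ≠ 0`.
A direct computation gives `e^{it₁} conj w - w = -i e^{it₂/2} det`, and `w ≠ 0` since `|α| < 1`,
so the determinant vanishes exactly when `e^{it₁} = w / conj w`. Finally
`(U - z)⁻¹ - (U' - z)⁻¹ = (U - z)⁻¹ (U' - U) (U' - z)⁻¹`, whose range is the image of the range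
of `U - U'` under the invertible operator `(U - z)⁻¹`.
-/

theorem Submodule.finrank_map_of_injective {R M N : Type*} [Ring R] [AddCommGroup M]
    [AddCommGroup N] [Module R M] [Module R N] {f : M →ₗ[R] N} (hf : Function.Injective f)
    (p : Submodule R M) : Module.finrank R (p.map f) = Module.finrank R p :=
  (Submodule.equivMapOfInjective f hf p).finrank_eq.symm

theorem finrank_span_pair_eq {K E : Type*} [Field K] [DecidableEq K] [AddCommGroup E]
    [Module K E] {x y : E} {a b c d : K} (hxy : LinearIndependent K ![x, y]) (hb : b ≠ 0) :
    Module.finrank K (Submodule.span K {a • x + b • y, c • x + d • y}) =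
      if a * d = b * c then 1 else 2 := by
  split_ifs with h
  · have hdep : (d / b) • (a • x + b • y) = c • x + d • y := by
      rw [smul_add, smul_smul, smul_smul, div_mul_cancel₀ d hb, div_mul_eq_mul_div, mul_comm d a,
        h, mul_div_cancel_left₀ c hb]
    have hne : a • x + b • y ≠ 0 := fun h0 => hb (LinearIndependent.pair_iff.1 hxy a b h0).2
    rw [Set.pair_comm, Submodule.span_insert_eq_span (Submodule.mem_span_singleton.2 ⟨_, hdep⟩),
      finrank_span_singleton hne]
  · have hli := (LinearIndependent.pair_add_smul_add_smul_iff a b c d).2 ⟨hxy, h⟩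
    rw [← Matrix.range_cons_cons_empty, finrank_span_eq_card hli, Fintype.card_fin]

namespace ContinuousLinearMap

variable {𝕜 E F : Type*} [NontriviallyNormedField 𝕜] [NormedAddCommGroup E] [NormedSpace 𝕜 E]
  [NormedAddCommGroup F] [NormedSpace 𝕜 F]

theorem range_comp_sub_comp (f : E →L[𝕜] F) (g h : E →L[𝕜] E) :
    LinearMap.range ((f ∘L g - f ∘L h : E →L[𝕜] F) : E →ₗ[𝕜] F) =
      (LinearMap.range ((g - h : E →L[𝕜] E) : E →ₗ[𝕜] E)).map (f : E →ₗ[𝕜] F) := by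
  rw [← comp_sub, toLinearMap_comp, LinearMap.range_comp]

theorem range_ringInverse_sub_ringInverse {A B : E →L[𝕜] E} (hA : IsUnit A) (hB : IsUnit B) :
    LinearMap.range ((Ring.inverse A - Ring.inverse B : E →L[𝕜] E) : E →ₗ[𝕜] E) =
      (LinearMap.range ((A - B : E →L[𝕜] E) : E →ₗ[𝕜] E)).map
        ((Ring.inverse A : E →L[𝕜] E) : E →ₗ[𝕜] E) := by
  have hB_surj : LinearMap.range ((Ring.inverse B : E →L[𝕜] E) : E →ₗ[𝕜] E) = ⊤ :=
    LinearMap.range_eq_top.2 fun x => ⟨B x, DFunLike.congr_fun (Ring.inverse_mul_cancel B hB) x⟩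
  rw [Ring.inverse_sub_inverse (iff_of_true hA hB), mul_def, mul_def, toLinearMap_comp,
    toLinearMap_comp, LinearMap.range_comp_of_range_eq_top _ hB_surj, LinearMap.range_comp,
    ← neg_sub A B, toLinearMap_neg, LinearMap.range_neg]

theorem ringInverse_injective {A : E →L[𝕜] E} (hA : IsUnit A) :
    Function.Injective ⇑(Ring.inverse A : E →L[𝕜] E) :=
  Function.LeftInverse.injective (g := A) (DFunLike.congr_fun (Ring.mul_inverse_cancel A hA))

end ContinuousLinearMap

theorem lp.range_le_of_forall_apply_single_mem {𝕜 ι F : Type*} [NormedField 𝕜] [DecidableEq ι]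
    [NormedAddCommGroup F] [NormedSpace 𝕜 F] (D : lp (fun _ : ι => 𝕜) 2 →L[𝕜] F)
    {S : Submodule 𝕜 F} (hS : IsClosed (S : Set F)) (h : ∀ k, D (lp.single 2 k 1) ∈ S) :
    LinearMap.range (D : lp (fun _ : ι => 𝕜) 2 →ₗ[𝕜] F) ≤ S := by
  rintro _ ⟨x, rfl⟩
  refine hS.mem_of_tendsto ((lp.hasSum_single (by norm_num) x).map D D.continuous)
    (Filter.Eventually.of_forall fun s => S.sum_mem fun k _ => ?_)
  have hk : lp.single 2 k (x k) = x k • lp.single (E := fun _ : ι => 𝕜) 2 k 1 := by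
    rw [← lp.single_smul, smul_eq_mul, mul_one]
  simpa [hk] using S.smul_mem (x k) (h k)

local notation "δ " k:max => (lp.single 2 k (1 : ℂ) : CMVl2)

theorem cmvEntry_eq_apply (T : CMVl2 →L[ℂ] CMVl2) (j k : ℤ) : cmvEntry T j k = T (δ k) j := by
  simp [cmvEntry, lp.inner_single_left]

theorem cmvEntry_sub (S T : CMVl2 →L[ℂ] CMVl2) (j k : ℤ) :
    cmvEntry (S - T) j k = cmvEntry S j k - cmvEntry T j k := by
  simp [cmvEntry]

theorem smul_single_add_smul_single_apply (a b : ℂ) (p q j : ℤ) :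
    (a • δ p + b • δ q : CMVl2) j = (if j = p then a else 0) + (if j = q then b else 0) := by
  simp only [lp.coeFn_add, lp.coeFn_smul, Pi.add_apply, Pi.smul_apply, lp.single_apply,
    Pi.single_apply, smul_eq_mul, mul_ite, mul_one, mul_zero]

theorem linearIndependent_single_pair {p q : ℤ} (hpq : p ≠ q) :
    LinearIndependent ℂ ![δ p, δ q] := by
  refine LinearIndependent.pair_iff.2 fun s t hst => ⟨?_, ?_⟩
  · simpa [smul_single_add_smul_single_apply, hpq] using congrArg (fun f : CMVl2 => f p) hst
  · simpa [smul_single_add_smul_single_apply, hpq.symm] using congrArg (fun f : CMVl2 => f q) hst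

theorem apply_single_eq_of_cmvEntry_eq_zero (T : CMVl2 →L[ℂ] CMVl2) {p q : ℤ} (hpq : p ≠ q)
    (k : ℤ) (h : ∀ j, j ≠ p → j ≠ q → cmvEntry T j k = 0) :
    T (δ k) = cmvEntry T p k • δ p + cmvEntry T q k • δ q := by
  ext j
  rw [smul_single_add_smul_single_apply, ← cmvEntry_eq_apply]
  by_cases hjp : j = p
  · simp [hjp, hpq]
  by_cases hjq : j = q
  · simp [hjq, hpq.symm]
  simp [hjp, hjq, h j hjp hjq]

theorem range_eq_span_of_cmvEntry_eq_zero_off_block (D : CMVl2 →L[ℂ] CMVl2) (p : ℤ)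
    (hD : ∀ j k, ¬((j = p ∨ j = p + 1) ∧ (k = p ∨ k = p + 1)) → cmvEntry D j k = 0) :
    LinearMap.range (D : CMVl2 →ₗ[ℂ] CMVl2) = Submodule.span ℂ
      {cmvEntry D p p • δ p + cmvEntry D (p + 1) p • δ (p + 1),
        cmvEntry D p (p + 1) • δ p + cmvEntry D (p + 1) (p + 1) • δ (p + 1)} := by
  have hpq : p ≠ p + 1 := by omega
  have hcol (k : ℤ) := apply_single_eq_of_cmvEntry_eq_zero D hpq k fun j hjp hjq =>
    hD j k (by omega)
  set u := cmvEntry D p p • δ p + cmvEntry D (p + 1) p • δ (p + 1)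
  set v := cmvEntry D p (p + 1) • δ p + cmvEntry D (p + 1) (p + 1) • δ (p + 1)
  have := FiniteDimensional.span_of_finite ℂ (Set.toFinite {u, v})
  refine le_antisymm (lp.range_le_of_forall_apply_single_mem D
    (Submodule.closed_of_finiteDimensional _) fun k => ?_) (Submodule.span_le.2 ?_)
  · by_cases hk : k = p ∨ k = p + 1
    · rcases hk with rfl | rfl
      · exact hcol _ ▸ Submodule.subset_span (Set.mem_insert _ _)
      · exact hcol _ ▸ Submodule.subset_span (Set.mem_insert_of_mem _ rfl)
    · simp [hcol k, hD p k (by omega), hD (p + 1) k (by omega)]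
  · rintro _ (rfl | rfl)
    · exact ⟨δ p, hcol p⟩
    · exact ⟨δ (p + 1), hcol (p + 1)⟩

theorem finrank_range_sub_of_decoupled_block {W W' : CMVl2 →L[ℂ] CMVl2} {p : ℤ} {α r x y : ℂ}
    (hW : cmvEntry W p p = -α ∧ cmvEntry W p (p + 1) = r ∧ cmvEntry W (p + 1) p = r ∧
      cmvEntry W (p + 1) (p + 1) = conj α)
    (hW'eq : ∀ j k : ℤ, ¬((j = p ∨ j = p + 1) ∧ (k = p ∨ k = p + 1)) →
      cmvEntry W' j k = cmvEntry W j k)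
    (hW' : cmvEntry W' p p = -x ∧ cmvEntry W' p (p + 1) = 0 ∧ cmvEntry W' (p + 1) p = 0 ∧
      cmvEntry W' (p + 1) (p + 1) = y)
    (hr : r ≠ 0) :
    Module.finrank ℂ (LinearMap.range ((W - W' : CMVl2 →L[ℂ] CMVl2) : CMVl2 →ₗ[ℂ] CMVl2)) =
      if (x - α) * (conj α - y) = r * r then 1 else 2 := by
  obtain ⟨hW₁₁, hW₁₂, hW₂₁, hW₂₂⟩ := hW
  obtain ⟨hW'₁₁, hW'₁₂, hW'₂₁, hW'₂₂⟩ := hW'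
  have hblock := range_eq_span_of_cmvEntry_eq_zero_off_block (W - W') p fun j k hjk => by
    rw [cmvEntry_sub, hW'eq j k hjk, sub_self]
  simp only [cmvEntry_sub, hW₁₁, hW₁₂, hW₂₁, hW₂₂, hW'₁₁, hW'₁₂, hW'₂₁, hW'₂₂, neg_sub_neg,
    sub_zero] at hblock
  rw [hblock]
  exact finrank_span_pair_eq (linearIndependent_single_pair (by omega)) hr

theorem conj_exp_I_mul_ofReal (x : ℝ) : conj (exp (I * x)) = exp (-I * x) := by
  rw [← exp_conj, map_mul, conj_I, conj_ofReal]

theorem exp_mul_conj_sub_eq {α w : ℂ} {t₁ t₂ : ℝ}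
    (hw : w = I * (α * exp (-I * (t₂ / 2)) - exp (I * (t₂ / 2)))) :
    exp (I * t₁) * conj w - w = -I * exp (I * (t₂ / 2)) *
      ((exp (I * t₁) - α) * (conj α - exp (-I * t₂)) - (1 - α * conj α)) := by
  have hhalf : ((t₂ / 2 : ℝ) : ℂ) = t₂ / 2 := by push_cast; ring
  have hconj := conj_exp_I_mul_ofReal (t₂ / 2)
  have hconj' : conj (exp (-I * (t₂ / 2))) = exp (I * (t₂ / 2)) := by
    rw [← hhalf, ← hconj, conj_conj]
  have hinv : exp (I * (t₂ / 2)) * exp (-I * (t₂ / 2)) = 1 := by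
    rw [← exp_add, ← add_mul, add_neg_cancel, zero_mul, exp_zero]
  have hsq : exp (-I * t₂) = exp (-I * (t₂ / 2)) ^ 2 := by
    rw [← exp_nat_mul]; ring_nf
  rw [hhalf] at hconj
  subst hw
  simp only [map_mul, map_sub, conj_I, hconj, hconj', hsq]
  linear_combination (-I * exp (-I * (t₂ / 2)) * (exp (I * t₁) - α)) * hinv

theorem decoupling_parameter_ne_zero {α w : ℂ} {t₂ : ℝ} (hα : ‖α‖ < 1)
    (hw : w = I * (α * exp (-I * (t₂ / 2)) - exp (I * (t₂ / 2)))) : w ≠ 0 := by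
  rw [hw]
  refine mul_ne_zero I_ne_zero (sub_ne_zero.2 fun h => hα.ne ?_)
  simpa [norm_exp] using congrArg norm h

theorem exp_eq_div_conj_iff {α w r : ℂ} {t₁ t₂ : ℝ} (hα : ‖α‖ < 1)
    (hw : w = I * (α * exp (-I * (t₂ / 2)) - exp (I * (t₂ / 2))))
    (hr : r * r = 1 - α * conj α) :
    exp (I * t₁) = w / conj w ↔ (exp (I * t₁) - α) * (conj α - exp (-I * t₂)) = r * r := by
  have hprefactor : -I * exp (I * (t₂ / 2)) ≠ 0 := mul_ne_zero (neg_ne_zero.2 I_ne_zero) (exp_ne_zero _)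
  rw [eq_div_iff ((map_ne_zero _).2 (decoupling_parameter_ne_zero hα hw)), ← sub_eq_zero,
    exp_mul_conj_sub_eq hw, ← hr, mul_eq_zero, or_iff_right hprefactor, sub_eq_zero]

theorem ofReal_sqrt_one_sub_norm_sq_mul_self {α : ℂ} (hα : ‖α‖ ≤ 1) :
    ((√(1 - ‖α‖ ^ 2) : ℝ) : ℂ) * ((√(1 - ‖α‖ ^ 2) : ℝ) : ℂ) = 1 - α * conj α := by
  rw [← ofReal_mul, Real.mul_self_sqrt (by nlinarith [norm_nonneg α]), mul_conj,
    normSq_eq_norm_sq]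
  push_cast
  ring

theorem cmv_decoupling_full_lattice_general
    (α : ℤ → ℂ) (hα : ∀ k, ‖α k‖ < 1)
    (ρ : ℤ → ℝ) (hρ : ∀ k, ρ k = Real.sqrt (1 - ‖α k‖ ^ 2))
    (k₀ : ℤ) (hk₀ : Odd k₀) (t₁ t₂ : ℝ) (w : ℂ)
    (hw : w = Complex.I * (α k₀ * Complex.exp (-Complex.I * (t₂ / 2)) -
            Complex.exp (Complex.I * (t₂ / 2))))
    (V W W' : CMVl2 →L[ℂ] CMVl2)
    (hVnorm : ∀ x, ‖V x‖ = ‖x‖)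
    (hWblk : ∀ k : ℤ,
      cmvEntry W (2*k) (2*k) = -α (2*k+1) ∧
      cmvEntry W (2*k) (2*k+1) = (ρ (2*k+1) : ℂ) ∧
      cmvEntry W (2*k+1) (2*k) = (ρ (2*k+1) : ℂ) ∧
      cmvEntry W (2*k+1) (2*k+1) = conj (α (2*k+1)))
    (hW'eq : ∀ j k : ℤ,
      ¬ ((j = k₀-1 ∨ j = k₀) ∧ (k = k₀-1 ∨ k = k₀)) → cmvEntry W' j k = cmvEntry W j k)
    (hW'blk : cmvEntry W' (k₀-1) (k₀-1) = -Complex.exp (Complex.I * t₁) ∧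
      cmvEntry W' (k₀-1) k₀ = 0 ∧ cmvEntry W' k₀ (k₀-1) = 0 ∧
      cmvEntry W' k₀ k₀ = Complex.exp (-Complex.I * t₂)) :
    FiniteDimensional ℂ (LinearMap.range ((V ∘L W - V ∘L W' : CMVl2 →L[ℂ] CMVl2) : CMVl2 →ₗ[ℂ] CMVl2)) ∧
    (Complex.exp (Complex.I * t₁) = w / conj w →
      Module.finrank ℂ (LinearMap.range ((V ∘L W - V ∘L W' : CMVl2 →L[ℂ] CMVl2) : CMVl2 →ₗ[ℂ] CMVl2)) = 1) ∧
    (Complex.exp (Complex.I * t₁) ≠ w / conj w →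
      Module.finrank ℂ (LinearMap.range ((V ∘L W - V ∘L W' : CMVl2 →L[ℂ] CMVl2) : CMVl2 →ₗ[ℂ] CMVl2)) = 2) ∧
    (∀ z : ℂ, IsUnit (V ∘L W - z • (1 : CMVl2 →L[ℂ] CMVl2)) →
      IsUnit (V ∘L W' - z • (1 : CMVl2 →L[ℂ] CMVl2)) →
      FiniteDimensional ℂ (LinearMap.range
        ((Ring.inverse (V ∘L W - z • (1 : CMVl2 →L[ℂ] CMVl2)) -
         Ring.inverse (V ∘L W' - z • (1 : CMVl2 →L[ℂ] CMVl2)) : CMVl2 →L[ℂ] CMVl2) : CMVl2 →ₗ[ℂ] CMVl2)) ∧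
      Module.finrank ℂ (LinearMap.range
        ((Ring.inverse (V ∘L W - z • (1 : CMVl2 →L[ℂ] CMVl2)) -
         Ring.inverse (V ∘L W' - z • (1 : CMVl2 →L[ℂ] CMVl2)) : CMVl2 →L[ℂ] CMVl2) : CMVl2 →ₗ[ℂ] CMVl2)) =
        Module.finrank ℂ (LinearMap.range ((V ∘L W - V ∘L W' : CMVl2 →L[ℂ] CMVl2) : CMVl2 →ₗ[ℂ] CMVl2))) := by
  obtain ⟨m, rfl⟩ := hk₀
  simp only [add_sub_cancel_right] at hW'eq hW'blk
  have hρ₀ : (ρ (2 * m + 1) : ℂ) ≠ 0 := by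
    rw [hρ, ofReal_ne_zero, Real.sqrt_ne_zero']
    nlinarith [hα (2 * m + 1), norm_nonneg (α (2 * m + 1))]
  have hrank := finrank_range_sub_of_decoupled_block (hWblk m) hW'eq hW'blk hρ₀
  rw [← Submodule.finrank_map_of_injective (LinearIsometry.injective ⟨(V : CMVl2 →ₗ[ℂ] CMVl2), hVnorm⟩),
    ← ContinuousLinearMap.range_comp_sub_comp] at hrank
  have hdet := exp_eq_div_conj_iff (t₁ := t₁) (hα _) hw
    (ofReal_sqrt_one_sub_norm_sq_mul_self (hα (2 * m + 1)).le)
  rw [← hρ] at hdet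
  have hfin := Module.finite_of_finrank_pos (lt_of_lt_of_eq (by split_ifs <;> norm_num) hrank.symm)
  refine ⟨hfin, fun h => by rw [hrank, if_pos (hdet.1 h)],
    fun h => by rw [hrank, if_neg (mt hdet.2 h)], fun z hA hB => ?_⟩
  rw [ContinuousLinearMap.range_ringInverse_sub_ringInverse hA hB, sub_sub_sub_cancel_right]
  exact ⟨inferInstance,
    Submodule.finrank_map_of_injective (ContinuousLinearMap.ringInverse_injective hA) _⟩

/-- Decoupling a full-lattice CMV operator `U = V ∘ W` at an odd site `k₀` gives a
perturbation `U - U'` of rank one if `e^{it₁} = w/conj w` (with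
`w = i(α_{k₀} e^{-it₂/2} - e^{it₂/2})`), of rank two otherwise; the same holds for
the resolvent difference at any point `z` of bounded invertibility. -/
theorem cmv_decoupling_full_lattice
    (α : ℤ → ℂ) (hα : ∀ k, ‖α k‖ < 1)
    (ρ : ℤ → ℝ) (hρ : ∀ k, ρ k = Real.sqrt (1 - ‖α k‖ ^ 2))
    (k₀ : ℤ) (hk₀ : Odd k₀) (t₁ t₂ : ℝ) (w : ℂ)
    (hw : w = Complex.I * (α k₀ * Complex.exp (-Complex.I * (t₂ / 2)) -
            Complex.exp (Complex.I * (t₂ / 2))))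
    (V W W' : CMVl2 →L[ℂ] CMVl2)
    (hVnorm : ∀ x, ‖V x‖ = ‖x‖) (hVsurj : Function.Surjective V)
    (hWnorm : ∀ x, ‖W x‖ = ‖x‖) (hWsurj : Function.Surjective W)
    (hW'norm : ∀ x, ‖W' x‖ = ‖x‖) (hW'surj : Function.Surjective W')
    (hVblk : ∀ k : ℤ,
      cmvEntry V (2*k-1) (2*k-1) = -α (2*k) ∧
      cmvEntry V (2*k-1) (2*k) = (ρ (2*k) : ℂ) ∧
      cmvEntry V (2*k) (2*k-1) = (ρ (2*k) : ℂ) ∧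
      cmvEntry V (2*k) (2*k) = conj (α (2*k)))
    (hVzero : ∀ j k : ℤ,
      (∀ l : ℤ, ¬ ((j = 2*l-1 ∨ j = 2*l) ∧ (k = 2*l-1 ∨ k = 2*l))) → cmvEntry V j k = 0)
    (hWblk : ∀ k : ℤ,
      cmvEntry W (2*k) (2*k) = -α (2*k+1) ∧
      cmvEntry W (2*k) (2*k+1) = (ρ (2*k+1) : ℂ) ∧
      cmvEntry W (2*k+1) (2*k) = (ρ (2*k+1) : ℂ) ∧
      cmvEntry W (2*k+1) (2*k+1) = conj (α (2*k+1)))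
    (hWzero : ∀ j k : ℤ,
      (∀ l : ℤ, ¬ ((j = 2*l ∨ j = 2*l+1) ∧ (k = 2*l ∨ k = 2*l+1))) → cmvEntry W j k = 0)
    (hW'eq : ∀ j k : ℤ,
      ¬ ((j = k₀-1 ∨ j = k₀) ∧ (k = k₀-1 ∨ k = k₀)) → cmvEntry W' j k = cmvEntry W j k)
    (hW'blk : cmvEntry W' (k₀-1) (k₀-1) = -Complex.exp (Complex.I * t₁) ∧
      cmvEntry W' (k₀-1) k₀ = 0 ∧ cmvEntry W' k₀ (k₀-1) = 0 ∧
      cmvEntry W' k₀ k₀ = Complex.exp (-Complex.I * t₂)) :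
    FiniteDimensional ℂ (LinearMap.range ((V ∘L W - V ∘L W' : CMVl2 →L[ℂ] CMVl2) : CMVl2 →ₗ[ℂ] CMVl2)) ∧
    (Complex.exp (Complex.I * t₁) = w / conj w →
      Module.finrank ℂ (LinearMap.range ((V ∘L W - V ∘L W' : CMVl2 →L[ℂ] CMVl2) : CMVl2 →ₗ[ℂ] CMVl2)) = 1) ∧
    (Complex.exp (Complex.I * t₁) ≠ w / conj w →
      Module.finrank ℂ (LinearMap.range ((V ∘L W - V ∘L W' : CMVl2 →L[ℂ] CMVl2) : CMVl2 →ₗ[ℂ] CMVl2)) = 2) ∧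
    (∀ z : ℂ, IsUnit (V ∘L W - z • (1 : CMVl2 →L[ℂ] CMVl2)) →
      IsUnit (V ∘L W' - z • (1 : CMVl2 →L[ℂ] CMVl2)) →
      FiniteDimensional ℂ (LinearMap.range
        ((Ring.inverse (V ∘L W - z • (1 : CMVl2 →L[ℂ] CMVl2)) -
         Ring.inverse (V ∘L W' - z • (1 : CMVl2 →L[ℂ] CMVl2)) : CMVl2 →L[ℂ] CMVl2) : CMVl2 →ₗ[ℂ] CMVl2)) ∧
      Module.finrank ℂ (LinearMap.range
        ((Ring.inverse (V ∘L W - z • (1 : CMVl2 →L[ℂ] CMVl2)) -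
         Ring.inverse (V ∘L W' - z • (1 : CMVl2 →L[ℂ] CMVl2)) : CMVl2 →L[ℂ] CMVl2) : CMVl2 →ₗ[ℂ] CMVl2)) =
        Module.finrank ℂ (LinearMap.range ((V ∘L W - V ∘L W' : CMVl2 →L[ℂ] CMVl2) : CMVl2 →ₗ[ℂ] CMVl2))) :=
  cmv_decoupling_full_lattice_general α hα ρ hρ k₀ hk₀ t₁ t₂ w hw V W W' hVnorm hWblk hW'eq hW'blk

end
end

section
/- Let m ∈ ℕ, let α be an m×m complex matrix with operator norm ‖α‖ < 1, ρ = (I_m − α*α)^{1/2}, ρ̃ = (I_m − αα*)^{1/2}, and let γ be an m×m unitary matrix. If ξ ∈ ℂ^m and c ∈ ℂ satisfy (γ − α)ξ + c·ρ̃ξ = 0 and ρξ + c·(α* − γ*)ξ = 0, then ξ = 0. In other words, the kernel of the 2m×2m block matrix A = [[γ − α, ρ̃], [ρ, α* − γ*]] contains no nonzero vector of the form (ξ, cξ). -/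
/-!
Pairing both equations with `ξ` gives `⟨ξ, (γ - α)ξ⟩ = -c ⟨ξ, ρ̃ξ⟩` and
`⟨ξ, ρξ⟩ = c · conj ⟨ξ, (γ - α)ξ⟩`, hence `⟨ξ, ρξ⟩ + |c|² ⟨ξ, ρ̃ξ⟩ = 0`. Both terms are
nonnegative, so `⟨ξ, ρξ⟩ = 0` and therefore `ρξ = 0`. Then `αᴴα ξ = ξ`, which forces `ξ = 0`
because `‖αᴴα‖ = ‖α‖² < 1`.
-/

open Matrix
open scoped Matrix.Norms.L2Operator ComplexOrder

namespace Matrix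

variable {𝕜 n : Type*} [RCLike 𝕜] [Fintype n]

theorem star_dotProduct_conjTranspose_mulVec {R : Type*} [CommSemiring R] [StarRing R]
    (M : Matrix n n R) (v : n → R) :
    star v ⬝ᵥ (Mᴴ *ᵥ v) = star (star v ⬝ᵥ (M *ᵥ v)) := by
  rw [← star_dotProduct_star, star_star, star_mulVec, dotProduct_mulVec]

theorem PosSemidef.mulVec_eq_zero_of_mulVec_add_smul_eq_zero {ρ ρt G : Matrix n n 𝕜}
    (hρ : ρ.PosSemidef) (hρt : ρt.PosSemidef) {ξ : n → 𝕜} {c : 𝕜}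
    (h1 : G *ᵥ ξ + c • (ρt *ᵥ ξ) = 0) (h2 : ρ *ᵥ ξ = c • (Gᴴ *ᵥ ξ)) :
    ρ *ᵥ ξ = 0 := by
  set P := star ξ ⬝ᵥ (ρ *ᵥ ξ)
  set Q := star ξ ⬝ᵥ (ρt *ᵥ ξ)
  have hQ : 0 ≤ Q := hρt.dotProduct_mulVec_nonneg ξ
  have hG : star ξ ⬝ᵥ (G *ᵥ ξ) = -(c * Q) := by
    simpa [dotProduct_add, eq_neg_iff_add_eq_zero] using congrArg (star ξ ⬝ᵥ ·) h1
  have hPQ : P + (star c * c) * Q = 0 := by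
    have hP : P = c * star (star ξ ⬝ᵥ (G *ᵥ ξ)) := by
      rw [← star_dotProduct_conjTranspose_mulVec, ← smul_eq_mul, ← dotProduct_smul, ← h2]
    rw [hP, hG, star_neg, star_mul', IsSelfAdjoint.of_nonneg hQ]
    ring
  have hP0 : P = 0 :=
    ((add_eq_zero_iff_of_nonneg (hρ.dotProduct_mulVec_nonneg ξ)
      (mul_nonneg (star_mul_self_nonneg c) hQ)).mp hPQ).1
  exact (hρ.dotProduct_mulVec_zero_iff ξ).mp hP0

variable [DecidableEq n]

theorem eq_zero_of_mulVec_eq_self_of_norm_lt_one {B : Matrix n n 𝕜} (hB : ‖B‖ < 1)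
    {v : n → 𝕜} (h : B *ᵥ v = v) : v = 0 := by
  set x := (EuclideanSpace.equiv n 𝕜).symm v
  have hx : ‖x‖ ≤ ‖B‖ * ‖x‖ := by
    have : ‖(EuclideanSpace.equiv n 𝕜).symm (B *ᵥ v)‖ ≤ ‖B‖ * ‖x‖ := B.l2_opNorm_mulVec x
    rwa [h] at this
  have : ‖x‖ = 0 := by nlinarith [norm_nonneg x]
  simpa [x] using this

theorem eq_zero_of_mulVec_eq_zero_of_mul_self_eq_one_sub {α ρ : Matrix n n 𝕜} (hα : ‖α‖ < 1)
    (hρ2 : ρ * ρ = 1 - αᴴ * α) {v : n → 𝕜} (h : ρ *ᵥ v = 0) : v = 0 := by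
  have hnorm : ‖αᴴ * α‖ < 1 := by
    rw [l2_opNorm_conjTranspose_mul_self]
    nlinarith [norm_nonneg α]
  refine eq_zero_of_mulVec_eq_self_of_norm_lt_one hnorm ?_
  have : (ρ * ρ) *ᵥ v = 0 := by rw [← mulVec_mulVec, h, mulVec_zero]
  rwa [hρ2, sub_mulVec, one_mulVec, sub_eq_zero, eq_comm] at this

end Matrix

theorem cmv_decoupling_kernel_no_graph_vector_general (m : ℕ) (α ρ ρt γ : Matrix (Fin m) (Fin m) ℂ)
    (hα : ‖α‖ < 1)
    (hρ : ρ.PosSemidef) (hρ2 : ρ * ρ = 1 - αᴴ * α)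
    (hρt : ρt.PosSemidef)
    (ξ : Fin m → ℂ) (c : ℂ)
    (h1 : (γ - α) *ᵥ ξ + c • (ρt *ᵥ ξ) = 0)
    (h2 : ρ *ᵥ ξ + c • ((αᴴ - γᴴ) *ᵥ ξ) = 0) :
    ξ = 0 := by
  have h2' : ρ *ᵥ ξ = c • ((γ - α)ᴴ *ᵥ ξ) := by
    rwa [conjTranspose_sub, ← neg_sub, neg_mulVec, smul_neg, eq_neg_iff_add_eq_zero]
  exact eq_zero_of_mulVec_eq_zero_of_mul_self_eq_one_sub hα hρ2
    (hρ.mulVec_eq_zero_of_mulVec_add_smul_eq_zero hρt h1 h2')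

/-- For an `m × m` complex matrix `α` with `‖α‖ < 1`, `ρ = (I - αᴴα)^{1/2}`,
`ρ̃ = (I - ααᴴ)^{1/2}`, and a unitary `γ`: if `ξ ∈ ℂ^m` and `c ∈ ℂ` satisfy
`(γ - α)ξ + c ρ̃ ξ = 0` and `ρ ξ + c (αᴴ - γᴴ) ξ = 0`, then `ξ = 0`; i.e. the kernel of
`[[γ - α, ρ̃], [ρ, αᴴ - γᴴ]]` contains no nonzero vector of the form `(ξ, cξ)`. -/
theorem cmv_decoupling_kernel_no_graph_vector (m : ℕ) (α ρ ρt γ : Matrix (Fin m) (Fin m) ℂ)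
    (hα : ‖α‖ < 1)
    (hρ : ρ.PosSemidef) (hρ2 : ρ * ρ = 1 - αᴴ * α)
    (hρt : ρt.PosSemidef) (hρt2 : ρt * ρt = 1 - α * αᴴ)
    (hγ : γ * γᴴ = 1 ∧ γᴴ * γ = 1)
    (ξ : Fin m → ℂ) (c : ℂ)
    (h1 : (γ - α) *ᵥ ξ + c • (ρt *ᵥ ξ) = 0)
    (h2 : ρ *ᵥ ξ + c • ((αᴴ - γᴴ) *ᵥ ξ) = 0) :
    ξ = 0 :=
  cmv_decoupling_kernel_no_graph_vector_general m α ρ ρt γ hα hρ hρ2 hρt ξ c h1 h2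
end

section
/- Let m ∈ ℕ, let α be an m×m complex matrix with ‖α‖ < 1, ρ = (I_m − α*α)^{1/2}, ρ̃ = (I_m − αα*)^{1/2}, let z ∈ ℂ, z ≠ 0, let ε ∈ {+1, −1}, and let P, Q, R, S, P̂, Q̂, R̂, Ŝ be m×m complex matrices satisfying P·Q̂* + Q·P̂* = 2ε·I_m, R·Ŝ* + S·R̂* = −2ε·I_m, P·Ŝ* + Q·R̂* = 0, and R·Q̂* + S·P̂* = 0. Define the odd-step updates P′ = ρ̃^{−1}(αP + zR), R′ = ρ^{−1}(z^{−1}P + α*R), Q′ = ρ̃^{−1}(αQ + zS), S′ = ρ^{−1}(z^{−1}Q + α*S), and P̂′ = ρ̃^{−1}(αP̂ + conj(z)^{−1}R̂), R̂′ = ρ^{−1}(conj(z)·P̂ + α*R̂), Q̂′ = ρ̃^{−1}(αQ̂ + conj(z)^{−1}Ŝ), Ŝ′ = ρ^{−1}(conj(z)·Q̂ + α*Ŝ). Then P′·Q̂′* + Q′·P̂′* = −2ε·I_m, R′·Ŝ′* + S′·R̂′* = 2ε·I_m, P′·Ŝ′* + Q′·R̂′* = 0, and R′·Q̂′* + S′·P̂′*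 = 0. The same four conclusions hold for the even-step updates P′ = ρ^{−1}(α*P + R), R′ = ρ̃^{−1}(P + αR), Q′ = ρ^{−1}(α*Q + S), S′ = ρ̃^{−1}(Q + αS), with P̂′, Q̂′, R̂′, Ŝ′ defined by the same formulas from P̂, Q̂, R̂, Ŝ. -/
open Matrix
open scoped Matrix.Norms.L2Operator ComplexOrder
open ComplexConjugate

/-!
Stack a solution as the block matrix `Ψ = [[P, Q], [R, S]]` and its hatted partner as `Ψ̂`. With
`J = [[0, 1], [1, 0]]` and `σ₃ = diag(1, -1)`, the four pairing identities say exactly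
`Ψ J Ψ̂ᴴ = 2ε σ₃`. A step replaces `Ψ, Ψ̂` by `𝕋(z) Ψ, 𝕋(1 / conj z) Ψ̂`, so everything reduces to
`𝕋(z) σ₃ 𝕋(1 / conj z)ᴴ = -σ₃`: the off-diagonal blocks cancel, and the diagonal ones are
`ρ̃⁻¹ (α αᴴ - 1) ρ̃⁻¹ = -1` and `ρ⁻¹ (1 - αᴴ α) ρ⁻¹ = 1`. The even step is the odd one for `αᴴ`
at `z = 1`, with `ρ` and `ρ̃` exchanged.
-/

section BlockAlgebra

variable {n 𝕜 : Type*} [Fintype n] [DecidableEq n]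

theorem fromBlocks_mul_swap_mul_conjTranspose [Semiring 𝕜] [StarRing 𝕜]
    (P Q R S Ph Qh Rh Sh : Matrix n n 𝕜) :
    fromBlocks P Q R S * fromBlocks 0 1 1 0 * (fromBlocks Ph Qh Rh Sh)ᴴ =
      fromBlocks (P * Qhᴴ + Q * Phᴴ) (P * Shᴴ + Q * Rhᴴ)
        (R * Qhᴴ + S * Phᴴ) (R * Shᴴ + S * Rhᴴ) := by
  simp [fromBlocks_conjTranspose, fromBlocks_multiply, add_comm]

theorem fromBlocks_inv_mul_fromBlocks_mul_fromBlocks_inv [CommRing 𝕜] {A B : Matrix n n 𝕜}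
    (hA : IsUnit A.det) (hB : IsUnit B.det) :
    fromBlocks A⁻¹ 0 0 B⁻¹ * fromBlocks (-(A * A)) 0 0 (B * B) * fromBlocks A⁻¹ 0 0 B⁻¹ =
      fromBlocks (-1) 0 0 1 := by
  simp [fromBlocks_multiply, ← mul_assoc, nonsing_inv_mul _ hA, nonsing_inv_mul _ hB,
    mul_nonsing_inv _ hA, mul_nonsing_inv _ hB]

end BlockAlgebra

variable {n : Type*} [Fintype n] [DecidableEq n]

theorem isUnit_det_of_mul_self_eq_one_sub {α ρ : Matrix n n ℂ} (hα : ‖α‖ < 1)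
    (hρ : ρ * ρ = 1 - αᴴ * α) : IsUnit ρ.det := by
  have : CompleteSpace (Matrix n n ℂ) := FiniteDimensional.complete ℂ _
  have hnorm : ‖αᴴ * α‖ < 1 := by
    rw [l2_opNorm_conjTranspose_mul_self]
    nlinarith [norm_nonneg α]
  have hunit : IsUnit (ρ * ρ) := hρ ▸ (Units.oneSub (αᴴ * α) hnorm).isUnit
  rw [isUnit_iff_isUnit_det, det_mul] at hunit
  exact isUnit_of_mul_isUnit_left hunit

theorem fromBlocks_mul_signature_mul_conjTranspose (α : Matrix n n ℂ) {z : ℂ} (hz : z ≠ 0) :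
    fromBlocks α (z • 1) (z⁻¹ • 1) αᴴ * fromBlocks 1 0 0 (-1) *
        (fromBlocks α ((conj z)⁻¹ • 1) ((conj z)⁻¹⁻¹ • 1) αᴴ)ᴴ =
      fromBlocks (α * αᴴ - 1) 0 0 (1 - αᴴ * α) := by
  simp [fromBlocks_conjTranspose, fromBlocks_multiply, hz, sub_eq_add_neg, add_comm]

/-- `𝕋(z, k)` for odd `k`, with `ρt` standing for `ρ̃`. -/
noncomputable def cmvTransfer (α ρ ρt : Matrix n n ℂ) (z : ℂ) : Matrix (n ⊕ n) (n ⊕ n) ℂ :=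
  fromBlocks ρt⁻¹ 0 0 ρ⁻¹ * fromBlocks α (z • 1) (z⁻¹ • 1) αᴴ

theorem cmvTransfer_mul_fromBlocks (α ρ ρt : Matrix n n ℂ) (z : ℂ) (P Q R S : Matrix n n ℂ) :
    cmvTransfer α ρ ρt z * fromBlocks P Q R S =
      fromBlocks (ρt⁻¹ * (α * P + z • R)) (ρt⁻¹ * (α * Q + z • S))
        (ρ⁻¹ * (z⁻¹ • P + αᴴ * R)) (ρ⁻¹ * (z⁻¹ • Q + αᴴ * S)) := by
  simp [cmvTransfer, mul_assoc, fromBlocks_multiply, mul_add]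

section Transfer

variable {α ρ ρt : Matrix n n ℂ} (hρ : ρ.IsHermitian) (hρ2 : ρ * ρ = 1 - αᴴ * α)
  (hρu : IsUnit ρ.det) (hρt : ρt.IsHermitian) (hρt2 : ρt * ρt = 1 - α * αᴴ)
  (hρtu : IsUnit ρt.det) {z : ℂ} (hz : z ≠ 0)
include hρ hρ2 hρu hρt hρt2 hρtu hz

theorem cmvTransfer_mul_signature_mul_conjTranspose :
    cmvTransfer α ρ ρt z * fromBlocks 1 0 0 (-1) * (cmvTransfer α ρ ρt (conj z)⁻¹)ᴴ =
      fromBlocks (-1) 0 0 1 := by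
  have hD : (fromBlocks ρt⁻¹ 0 0 ρ⁻¹)ᴴ = fromBlocks ρt⁻¹ 0 0 ρ⁻¹ := by
    simp [fromBlocks_conjTranspose, conjTranspose_nonsing_inv, hρ.eq, hρt.eq]
  have hM := fromBlocks_mul_signature_mul_conjTranspose α hz
  rw [show α * αᴴ - 1 = -(ρt * ρt) by rw [hρt2]; abel, ← hρ2] at hM
  rw [cmvTransfer, cmvTransfer, conjTranspose_mul, hD,
    ← fromBlocks_inv_mul_fromBlocks_mul_fromBlocks_inv hρtu hρu, ← hM]
  noncomm_ring

theorem cmvTransfer_pairing {c : ℂ} {Ψ Ψh : Matrix (n ⊕ n) (n ⊕ n) ℂ}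
    (h : Ψ * fromBlocks 0 1 1 0 * Ψhᴴ = c • fromBlocks 1 0 0 (-1)) :
    cmvTransfer α ρ ρt z * Ψ * fromBlocks 0 1 1 0 * (cmvTransfer α ρ ρt (conj z)⁻¹ * Ψh)ᴴ =
      c • fromBlocks (-1) 0 0 1 :=
  calc _ = cmvTransfer α ρ ρt z * (Ψ * fromBlocks 0 1 1 0 * Ψhᴴ) *
        (cmvTransfer α ρ ρt (conj z)⁻¹)ᴴ := by
        simp only [conjTranspose_mul, Matrix.mul_assoc]
    _ = c • (cmvTransfer α ρ ρt z * fromBlocks 1 0 0 (-1) *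
        (cmvTransfer α ρ ρt (conj z)⁻¹)ᴴ) := by
        rw [h, Matrix.mul_smul, Matrix.smul_mul]
    _ = c • fromBlocks (-1) 0 0 1 := by
        rw [cmvTransfer_mul_signature_mul_conjTranspose hρ hρ2 hρu hρt hρt2 hρtu hz]

theorem cmvTransfer_pairing_identities {c : ℂ} {P Q R S Ph Qh Rh Sh : Matrix n n ℂ}
    (h1 : P * Qhᴴ + Q * Phᴴ = c • 1) (h2 : R * Shᴴ + S * Rhᴴ = (-c) • 1)
    (h3 : P * Shᴴ + Q * Rhᴴ = 0) (h4 : R * Qhᴴ + S * Phᴴ = 0) :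
    ρt⁻¹ * (α * P + z • R) * (ρt⁻¹ * (α * Qh + (conj z)⁻¹ • Sh))ᴴ
        + ρt⁻¹ * (α * Q + z • S) * (ρt⁻¹ * (α * Ph + (conj z)⁻¹ • Rh))ᴴ = (-c) • 1 ∧
      ρ⁻¹ * (z⁻¹ • P + αᴴ * R) * (ρ⁻¹ * ((conj z) • Qh + αᴴ * Sh))ᴴ
        + ρ⁻¹ * (z⁻¹ • Q + αᴴ * S) * (ρ⁻¹ * ((conj z) • Ph + αᴴ * Rh))ᴴ = c • 1 ∧
      ρt⁻¹ * (α * P + z • R) * (ρ⁻¹ * ((conj z) • Qh + αᴴ * Sh))ᴴ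
        + ρt⁻¹ * (α * Q + z • S) * (ρ⁻¹ * ((conj z) • Ph + αᴴ * Rh))ᴴ = 0 ∧
      ρ⁻¹ * (z⁻¹ • P + αᴴ * R) * (ρt⁻¹ * (α * Qh + (conj z)⁻¹ • Sh))ᴴ
        + ρ⁻¹ * (z⁻¹ • Q + αᴴ * S) * (ρt⁻¹ * (α * Ph + (conj z)⁻¹ • Rh))ᴴ = 0 := by
  have h : fromBlocks P Q R S * fromBlocks 0 1 1 0 * (fromBlocks Ph Qh Rh Sh)ᴴ =
      c • fromBlocks 1 0 0 (-1) := by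
    rw [fromBlocks_mul_swap_mul_conjTranspose, h1, h2, h3, h4, fromBlocks_smul]
    simp
  have hstep := cmvTransfer_pairing hρ hρ2 hρu hρt hρt2 hρtu hz h
  rw [cmvTransfer_mul_fromBlocks, cmvTransfer_mul_fromBlocks, inv_inv,
    fromBlocks_mul_swap_mul_conjTranspose, fromBlocks_smul, fromBlocks_inj] at hstep
  obtain ⟨h11, h12, h21, h22⟩ := hstep
  rw [smul_neg, ← neg_smul] at h11
  rw [smul_zero] at h12 h21
  exact ⟨h11, h22, h12, h21⟩

end Transfer

theorem cmv_pairing_identities_step_general (m : ℕ) (α ρ ρt : Matrix (Fin m) (Fin m) ℂ)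
    (hα : ‖α‖ < 1)
    (hρ : ρ.PosSemidef) (hρ2 : ρ * ρ = 1 - αᴴ * α)
    (hρt : ρt.PosSemidef) (hρt2 : ρt * ρt = 1 - α * αᴴ)
    (z : ℂ) (hz : z ≠ 0) (ε : ℂ)
    (P Q R S Ph Qh Rh Sh : Matrix (Fin m) (Fin m) ℂ)
    (h1 : P * Qhᴴ + Q * Phᴴ = (2 * ε) • (1 : Matrix (Fin m) (Fin m) ℂ))
    (h2 : R * Shᴴ + S * Rhᴴ = (-(2 * ε)) • (1 : Matrix (Fin m) (Fin m) ℂ))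
    (h3 : P * Shᴴ + Q * Rhᴴ = 0)
    (h4 : R * Qhᴴ + S * Phᴴ = 0) :
    (∀ P' R' Q' S' Ph' Rh' Qh' Sh' : Matrix (Fin m) (Fin m) ℂ,
      P' = ρt⁻¹ * (α * P + z • R) → R' = ρ⁻¹ * (z⁻¹ • P + αᴴ * R) →
      Q' = ρt⁻¹ * (α * Q + z • S) → S' = ρ⁻¹ * (z⁻¹ • Q + αᴴ * S) →
      Ph' = ρt⁻¹ * (α * Ph + (conj z)⁻¹ • Rh) → Rh' = ρ⁻¹ * ((conj z) • Ph + αᴴ * Rh) →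
      Qh' = ρt⁻¹ * (α * Qh + (conj z)⁻¹ • Sh) → Sh' = ρ⁻¹ * ((conj z) • Qh + αᴴ * Sh) →
      P' * Qh'ᴴ + Q' * Ph'ᴴ = (-(2 * ε)) • (1 : Matrix (Fin m) (Fin m) ℂ) ∧
      R' * Sh'ᴴ + S' * Rh'ᴴ = (2 * ε) • (1 : Matrix (Fin m) (Fin m) ℂ) ∧
      P' * Sh'ᴴ + Q' * Rh'ᴴ = 0 ∧
      R' * Qh'ᴴ + S' * Ph'ᴴ = 0) ∧
    (∀ P' R' Q' S' Ph' Rh' Qh' Sh' : Matrix (Fin m) (Fin m) ℂ,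
      P' = ρ⁻¹ * (αᴴ * P + R) → R' = ρt⁻¹ * (P + α * R) →
      Q' = ρ⁻¹ * (αᴴ * Q + S) → S' = ρt⁻¹ * (Q + α * S) →
      Ph' = ρ⁻¹ * (αᴴ * Ph + Rh) → Rh' = ρt⁻¹ * (Ph + α * Rh) →
      Qh' = ρ⁻¹ * (αᴴ * Qh + Sh) → Sh' = ρt⁻¹ * (Qh + α * Sh) →
      P' * Qh'ᴴ + Q' * Ph'ᴴ = (-(2 * ε)) • (1 : Matrix (Fin m) (Fin m) ℂ) ∧
      R' * Sh'ᴴ + S' * Rh'ᴴ = (2 * ε) • (1 : Matrix (Fin m) (Fin m) ℂ) ∧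
      P' * Sh'ᴴ + Q' * Rh'ᴴ = 0 ∧
      R' * Qh'ᴴ + S' * Ph'ᴴ = 0) := by
  have hρu := isUnit_det_of_mul_self_eq_one_sub hα hρ2
  have hρtu : IsUnit ρt.det := isUnit_det_of_mul_self_eq_one_sub
    ((l2_opNorm_conjTranspose α).trans_lt hα) (by rwa [conjTranspose_conjTranspose])
  constructor <;> rintro _ _ _ _ _ _ _ _ rfl rfl rfl rfl rfl rfl rfl rfl
  · exact cmvTransfer_pairing_identities hρ.1 hρ2 hρu hρt.1 hρt2 hρtu hz h1 h2 h3 h4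
  · simpa using cmvTransfer_pairing_identities (α := αᴴ) (z := 1) hρt.1
      (by rwa [conjTranspose_conjTranspose]) hρtu hρ.1 (by rwa [conjTranspose_conjTranspose])
      hρu one_ne_zero h1 h2 h3 h4

/-- One step of the CMV transfer matrix recursion (odd and even cases) preserves, up to a
sign flip, the four pairing identities between a solution at spectral parameter `z` and
the corresponding hatted solution at the reflected parameter `1/conj z`. -/
theorem cmv_pairing_identities_step (m : ℕ) (α ρ ρt : Matrix (Fin m) (Fin m) ℂ)
    (hα : ‖α‖ < 1)
    (hρ : ρ.PosSemidef) (hρ2 : ρ * ρ = 1 - αᴴ * α)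
    (hρt : ρt.PosSemidef) (hρt2 : ρt * ρt = 1 - α * αᴴ)
    (z : ℂ) (hz : z ≠ 0) (ε : ℂ) (hε : ε = 1 ∨ ε = -1)
    (P Q R S Ph Qh Rh Sh : Matrix (Fin m) (Fin m) ℂ)
    (h1 : P * Qhᴴ + Q * Phᴴ = (2 * ε) • (1 : Matrix (Fin m) (Fin m) ℂ))
    (h2 : R * Shᴴ + S * Rhᴴ = (-(2 * ε)) • (1 : Matrix (Fin m) (Fin m) ℂ))
    (h3 : P * Shᴴ + Q * Rhᴴ = 0)
    (h4 : R * Qhᴴ + S * Phᴴ = 0) :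
    (∀ P' R' Q' S' Ph' Rh' Qh' Sh' : Matrix (Fin m) (Fin m) ℂ,
      P' = ρt⁻¹ * (α * P + z • R) → R' = ρ⁻¹ * (z⁻¹ • P + αᴴ * R) →
      Q' = ρt⁻¹ * (α * Q + z • S) → S' = ρ⁻¹ * (z⁻¹ • Q + αᴴ * S) →
      Ph' = ρt⁻¹ * (α * Ph + (conj z)⁻¹ • Rh) → Rh' = ρ⁻¹ * ((conj z) • Ph + αᴴ * Rh) →
      Qh' = ρt⁻¹ * (α * Qh + (conj z)⁻¹ • Sh) → Sh' = ρ⁻¹ * ((conj z) • Qh + αᴴ * Sh) →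
      P' * Qh'ᴴ + Q' * Ph'ᴴ = (-(2 * ε)) • (1 : Matrix (Fin m) (Fin m) ℂ) ∧
      R' * Sh'ᴴ + S' * Rh'ᴴ = (2 * ε) • (1 : Matrix (Fin m) (Fin m) ℂ) ∧
      P' * Sh'ᴴ + Q' * Rh'ᴴ = 0 ∧
      R' * Qh'ᴴ + S' * Ph'ᴴ = 0) ∧
    (∀ P' R' Q' S' Ph' Rh' Qh' Sh' : Matrix (Fin m) (Fin m) ℂ,
      P' = ρ⁻¹ * (αᴴ * P + R) → R' = ρt⁻¹ * (P + α * R) →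
      Q' = ρ⁻¹ * (αᴴ * Q + S) → S' = ρt⁻¹ * (Q + α * S) →
      Ph' = ρ⁻¹ * (αᴴ * Ph + Rh) → Rh' = ρt⁻¹ * (Ph + α * Rh) →
      Qh' = ρ⁻¹ * (αᴴ * Qh + Sh) → Sh' = ρt⁻¹ * (Qh + α * Sh) →
      P' * Qh'ᴴ + Q' * Ph'ᴴ = (-(2 * ε)) • (1 : Matrix (Fin m) (Fin m) ℂ) ∧
      R' * Sh'ᴴ + S' * Rh'ᴴ = (2 * ε) • (1 : Matrix (Fin m) (Fin m) ℂ) ∧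
      P' * Sh'ᴴ + Q' * Rh'ᴴ = 0 ∧
      R' * Qh'ᴴ + S' * Ph'ᴴ = 0) :=
  cmv_pairing_identities_step_general m α ρ ρt hα hρ hρ2 hρt hρt2 z hz ε P Q R S Ph Qh Rh Sh h1 h2
    h3 h4
end
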